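/- Let f : ℝ₊ → ℝ₊ be continuous and positive with F(v) = ∫_{v₀}^{v} dt/f(t) satisfying F(v) → +∞ as v → +∞ and F(v) → −∞ as v → 0⁺. Let V : [t₀, t₁) → ℝ₊ be C¹ satisfying |V'(t)| ≤ C·f(V(t))·k(t), where C ≥ 0 is a constant and k : [t₀, t₁] → ℝ≥0 is integrable. Then V extends continuously to t₁ with a limit value ṽ ∈ (0, ∞). -/

import Mathlib

open Set Filter MeasureTheory intervalIntegral Topology

/-!
`G = F ∘ V` has derivative `V' / f (V)`, which is dominated by `C k`. Hence the oscillation of `G`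
near `t₁` is bounded by tail integrals of the integrable `k`, so `G` is Cauchy, hence convergent,
as `t → t₁⁻`. Since `F` is a continuous strictly increasing bijection of `(0, ∞)` onto `ℝ`,
`V = F⁻¹ ∘ G` then converges to the positive number `F⁻¹ (lim G)`.
-/

theorem abs_sub_le_integral_of_abs_deriv_le {G G' φ : ℝ → ℝ} {a b : ℝ} (hab : a ≤ b)
    (hcont : ContinuousOn G (Icc a b)) (hderiv : ∀ x ∈ Ioo a b, HasDerivAt G (G' x) x)
    (hφ : IntegrableOn φ (Icc a b)) (hbound : ∀ x ∈ Ioo a b, |G' x| ≤ φ x) :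
    |G b - G a| ≤ ∫ x in a..b, φ x := by
  rw [abs_le]
  constructor
  · have := sub_le_integral_of_hasDeriv_right_of_le hab hcont.neg
      (fun x hx => (hderiv x hx).neg.hasDerivWithinAt) hφ
      (fun x hx => (neg_le_abs _).trans (hbound x hx))
    simp only [Pi.neg_apply] at this
    linarith
  · exact sub_le_integral_of_hasDeriv_right_of_le hab hcont
      (fun x hx => (hderiv x hx).hasDerivWithinAt) hφ
      (fun x hx => (le_abs_self _).trans (hbound x hx))

theorem exists_tendsto_of_dist_le_dist {α β γ : Type*} [PseudoMetricSpace β] [CompleteSpace β]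
    [PseudoMetricSpace γ] {l : Filter α} [l.NeBot] {G : α → β} {K : α → γ} {c : γ}
    (hK : Tendsto K l (𝓝 c))
    (hGK : ∀ᶠ p in l ×ˢ l, dist (G p.1) (G p.2) ≤ dist (K p.1) (K p.2)) :
    ∃ L, Tendsto G l (𝓝 L) := by
  have hKdist : Tendsto (fun p : α × α => dist (K p.1) (K p.2)) (l ×ˢ l) (𝓝 0) :=
    tendsto_uniformity_iff_dist_tendsto_zero.1 (cauchy_map_iff'.1 hK.cauchy_map)
  refine cauchy_map_iff_exists_tendsto.1 (cauchy_map_iff'.2 ?_)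
  exact tendsto_uniformity_iff_dist_tendsto_zero.2
    (squeeze_zero' (Eventually.of_forall fun _ => dist_nonneg) hGK hKdist)

theorem exists_tendsto_nhdsLT_of_abs_deriv_le {G G' φ : ℝ → ℝ} {a b : ℝ} (hab : a < b)
    (hcont : ContinuousOn G (Ico a b)) (hderiv : ∀ x ∈ Ioo a b, HasDerivAt G (G' x) x)
    (hφ : IntegrableOn φ (Icc a b)) (hbound : ∀ x ∈ Ioo a b, |G' x| ≤ φ x) :
    ∃ L, Tendsto G (𝓝[<] b) (𝓝 L) := by
  set Φ : ℝ → ℝ := fun u => ∫ x in a..u, φ x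
  have hΦ : Tendsto Φ (𝓝[<] b) (𝓝 (Φ b)) := by
    have hΦc := continuousOn_primitive_interval (μ := volume) (a := a) (b := b)
      (by rwa [uIcc_of_le hab.le])
    rw [uIcc_of_le hab.le] at hΦc
    exact (hΦc b (right_mem_Icc.2 hab.le)).mono_of_mem_nhdsWithin
      (Icc_mem_nhdsLT hab) |>.tendsto
  have hincr : ∀ x ∈ Ioo a b, ∀ y ∈ Ioo a b, x ≤ y → dist (G x) (G y) ≤ dist (Φ x) (Φ y) := by
    intro x hx y hy hxy
    have hint : ∀ u ∈ Ioo a b, IntervalIntegrable φ volume a u := fun u hu =>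
      IntegrableOn.intervalIntegrable <| hφ.mono_set <| by
        rw [uIcc_of_le hu.1.le]; exact Icc_subset_Icc_right hu.2.le
    rw [dist_comm (Φ x), Real.dist_eq, Real.dist_eq, abs_sub_comm]
    change _ ≤ |(∫ t in a..y, φ t) - ∫ t in a..x, φ t|
    rw [integral_interval_sub_left (hint y hy) (hint x hx)]
    refine (abs_sub_le_integral_of_abs_deriv_le hxy
      (hcont.mono (Icc_subset_Ico hx.1.le hy.2))
      (fun z hz => hderiv z ⟨hx.1.trans hz.1, hz.2.trans hy.2⟩)
      (hφ.mono_set (Icc_subset_Icc hx.1.le hy.2.le))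
      (fun z hz => hbound z ⟨hx.1.trans hz.1, hz.2.trans hy.2⟩)).trans (le_abs_self _)
  refine exists_tendsto_of_dist_le_dist hΦ ?_
  filter_upwards [prod_mem_prod (Ioo_mem_nhdsLT hab) (Ioo_mem_nhdsLT hab)] with p hp
  rcases le_total p.1 p.2 with h | h
  · exact hincr _ hp.1 _ hp.2 h
  · rw [dist_comm, dist_comm (Φ p.1)]
    exact hincr _ hp.2 _ hp.1 h

theorem hasDerivAt_integral_of_continuousOn {g : ℝ → ℝ} {s : Set ℝ} (hs : IsOpen s)
    [hs' : s.OrdConnected] (hg : ContinuousOn g s) {a v : ℝ} (ha : a ∈ s) (hv : v ∈ s) :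
    HasDerivAt (fun u => ∫ t in a..u, g t) (g v) v :=
  integral_hasDerivAt_right ((hg.mono (hs'.uIcc_subset ha hv)).intervalIntegrable)
    (hg.stronglyMeasurableAtFilter hs v hv) (hg.continuousAt (hs.mem_nhds hv))

theorem StrictMonoOn.tendsto_of_tendsto_comp {α β : Type*} [LinearOrder α] [TopologicalSpace α]
    [OrderTopology α] [LinearOrder β] [TopologicalSpace β] [OrderTopology β]
    {F : α → β} {s : Set α} [hs : s.OrdConnected] (hF : StrictMonoOn F s)
    {ι : Type*} {l : Filter ι} {V : ι → α} {v : α} (hv : v ∈ s) (hVs : ∀ᶠ i in l, V i ∈ s)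
    (hFV : Tendsto (F ∘ V) l (𝓝 (F v))) : Tendsto V l (𝓝 v) := by
  rw [tendsto_order]
  constructor
  · intro c hc
    by_cases hcs : c ∈ s
    · filter_upwards [hVs, hFV.eventually (eventually_gt_nhds (hF hcs hv hc))] with i hi hFi
      exact (hF.lt_iff_lt hcs hi).1 hFi
    · filter_upwards [hVs] with i hi
      by_contra! hic
      exact hcs (hs.out hi hv ⟨hic, hc.le⟩)
  · intro c hc
    by_cases hcs : c ∈ s
    · filter_upwards [hVs, hFV.eventually (eventually_lt_nhds (hF hv hcs hc))] with i hi hFi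
      exact (hF.lt_iff_lt hi hcs).1 hFi
    · filter_upwards [hVs] with i hi
      by_contra! hic
      exact hcs (hs.out hv hi ⟨hc.le, hic⟩)

theorem exists_mem_Ioi_tendsto_of_tendsto_comp {F : ℝ → ℝ} {a : ℝ} (hFc : ContinuousOn F (Ioi a))
    (hFm : StrictMonoOn F (Ioi a)) (hbot : Tendsto F (𝓝[>] a) atBot)
    (htop : Tendsto F atTop atTop) {ι : Type*} {l : Filter ι} {V : ι → ℝ}
    (hV : ∀ᶠ i in l, V i ∈ Ioi a) {L : ℝ} (hFV : Tendsto (F ∘ V) l (𝓝 L)) :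
    ∃ v ∈ Ioi a, Tendsto V l (𝓝 v) := by
  obtain ⟨v, hv, rfl⟩ := hFc.surjOn_of_tendsto nonempty_Ioi
    ((tendsto_comp_coe_Ioi_atBot (.of_dense _)).2 hbot) (tendsto_comp_val_Ioi_atTop.2 htop)
    (mem_univ L)
  exact ⟨v, hv, hFm.tendsto_of_tendsto_comp hv hV hFV⟩

theorem continuation_of_solution_to_boundary_general
    (f : ℝ → ℝ) (hfc : ContinuousOn f (Ioi 0)) (hfpos : ∀ v ∈ Ioi (0:ℝ), 0 < f v)
    (v₀ : ℝ) (hv₀ : 0 < v₀)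
    (F : ℝ → ℝ) (hF : ∀ v, F v = ∫ t in v₀..v, 1 / f t)
    (htop : Tendsto F atTop atTop)
    (hbot : Tendsto F (nhdsWithin 0 (Ioi 0)) atBot)
    (t₀ t₁ : ℝ) (ht : t₀ < t₁)
    (V : ℝ → ℝ) (hV : ContDiffOn ℝ 1 V (Ico t₀ t₁))
    (hVpos : ∀ t ∈ Ico t₀ t₁, 0 < V t)
    (C : ℝ)
    (k : ℝ → ℝ) (hk : IntegrableOn k (Icc t₀ t₁))
    (hbound : ∀ t ∈ Ico t₀ t₁,
      |derivWithin V (Ico t₀ t₁) t| ≤ C * f (V t) * k t) :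
    ∃ v' : ℝ, 0 < v' ∧ Tendsto V (nhdsWithin t₁ (Iio t₁)) (nhds v') := by
  have hFd : ∀ v ∈ Ioi (0:ℝ), HasDerivAt F (1 / f v) v := fun v hv => by
    rw [show F = _ from funext hF]
    exact hasDerivAt_integral_of_continuousOn isOpen_Ioi (g := fun t => 1 / f t)
      (continuousOn_const.div hfc fun v hv => (hfpos v hv).ne') hv₀ hv
  have hFc : ContinuousOn F (Ioi 0) := fun v hv => (hFd v hv).continuousAt.continuousWithinAt
  have hFm : StrictMonoOn F (Ioi 0) := strictMonoOn_of_deriv_pos (convex_Ioi 0) hFc fun v hv => by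
    rw [interior_Ioi] at hv
    rw [(hFd v hv).deriv]
    exact one_div_pos.2 (hfpos v hv)
  obtain ⟨L, hL⟩ : ∃ L, Tendsto (F ∘ V) (𝓝[<] t₁) (𝓝 L) := by
    refine exists_tendsto_nhdsLT_of_abs_deriv_le ht
      (G' := fun t => 1 / f (V t) * derivWithin V (Ico t₀ t₁) t) (hFc.comp hV.continuousOn hVpos)
      (fun t ht => ?_) (hk.const_mul C) (fun t ht => ?_)
    · exact (hFd _ (hVpos t (Ioo_subset_Ico_self ht))).comp t
        (((hV.differentiableOn one_ne_zero) t (Ioo_subset_Ico_self ht)).hasDerivWithinAt.hasDerivAt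
          (Ico_mem_nhds ht.1 ht.2))
    · have hf := hfpos _ (hVpos t (Ioo_subset_Ico_self ht))
      rw [abs_mul, abs_of_pos (one_div_pos.2 hf), one_div, inv_mul_le_iff₀ hf]
      linarith [hbound t (Ioo_subset_Ico_self ht)]
  have hV_eventually_pos : ∀ᶠ t in 𝓝[<] t₁, V t ∈ Ioi 0 := by
    filter_upwards [Ioo_mem_nhdsLT ht] with t ht' using hVpos t (Ioo_subset_Ico_self ht')
  exact exists_mem_Ioi_tendsto_of_tendsto_comp hFc hFm hbot htop hV_eventually_pos hL

theorem continuation_of_solution_to_boundary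
    (f : ℝ → ℝ) (hfc : ContinuousOn f (Ioi 0)) (hfpos : ∀ v ∈ Ioi (0:ℝ), 0 < f v)
    (v₀ : ℝ) (hv₀ : 0 < v₀)
    (F : ℝ → ℝ) (hF : ∀ v, F v = ∫ t in v₀..v, 1 / f t)
    (htop : Tendsto F atTop atTop)
    (hbot : Tendsto F (nhdsWithin 0 (Ioi 0)) atBot)
    (t₀ t₁ : ℝ) (ht : t₀ < t₁)
    (V : ℝ → ℝ) (hV : ContDiffOn ℝ 1 V (Ico t₀ t₁))
    (hVpos : ∀ t ∈ Ico t₀ t₁, 0 < V t)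
    (C : ℝ) (hC : 0 ≤ C)
    (k : ℝ → ℝ) (hk : IntegrableOn k (Icc t₀ t₁))
    (hknn : ∀ t ∈ Icc t₀ t₁, 0 ≤ k t)
    (hbound : ∀ t ∈ Ico t₀ t₁,
      |derivWithin V (Ico t₀ t₁) t| ≤ C * f (V t) * k t) :
    ∃ v' : ℝ, 0 < v' ∧ Tendsto V (nhdsWithin t₁ (Iio t₁)) (nhds v') :=
  continuation_of_solution_to_boundary_general f hfc hfpos v₀ hv₀ F hF htop hbot t₀ t₁ ht V hV hVpos
    C k hk hbound
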